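/- arXiv:1805.02289 — 4 statements merged into one kernel-verified Lean document; each statement's English description precedes it below -/
import Mathlib

section
/- Let R be a Dedekind domain and let a be a nonzero proper ideal of R. For j ≥ 1 let g_j be the product of all maximal ideals p with ord_p(a) = j (g_j = R if none), and let m be the maximal multiplicity occurring in a. Define sequences of ideals by a_0 = a, b_1 = rad(a), and recursively a_i = (a_{i−1} : b_i) and b_{i+1} = a_i + b_i for i ≥ 1. Then for every 0 ≤ i ≤ m one has a_i = ∏_{j=i+1}^{m} g_j^{\,j−i}, and for every 1 ≤ i ≤ m one has b_i = ∏_{j=i}^{m} g_j. -/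
open UniqueFactorizationMonoid Classical

private lemma colon_mul_right_aux {R : Type*} [CommRing R] [IsDedekindDomain R]
    (I J : Ideal R) (hJ : J ≠ 0) : (I * J).colon J = I := by
  ext x
  simp only [Submodule.mem_colon, smul_eq_mul]
  constructor
  · intro h
    have h1 : Ideal.span {x} * J ≤ I * J := Ideal.span_singleton_mul_le_iff.mpr h
    have h2 : I ∣ Ideal.span {x} :=
      (mul_dvd_mul_iff_right hJ).mp (Ideal.dvd_iff_le.mpr h1)
    exact Ideal.dvd_iff_le.mp h2 (Ideal.mem_span_singleton_self x)
  · intro hx j hj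
    exact Ideal.mul_mem_mul hx hj

/-- Explicit description of the ideals produced by the radical-decomposition
algorithm: with `a` a nonzero proper ideal of a Dedekind domain, `g j` the product
of the maximal ideals of multiplicity exactly `j` in `a`, `m` the largest
multiplicity, and sequences `A 0 = a`, `B 1 = rad a`, `A i = (A (i-1) : B i)`,
`B (i+1) = A i + B i`, one has `A i = ∏_{j=i+1}^m (g j)^(j-i)` for `0 ≤ i ≤ m`
and `B i = ∏_{j=i}^m g j` for `1 ≤ i ≤ m`. -/
theorem radical_decomposition_steps {R : Type*} [CommRing R] [IsDedekindDomain R]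
    (a : Ideal R) (ha : a ≠ 0) (ha' : a ≠ ⊤)
    (g : ℕ → Ideal R)
    (hg : ∀ j, 1 ≤ j → ∀ S : Finset (Ideal R),
      (∀ p : Ideal R, p ∈ S ↔ p.IsMaximal ∧ (normalizedFactors a).count p = j) →
      g j = ∏ p ∈ S, p)
    (m : ℕ)
    (hm : m = (normalizedFactors a).toFinset.sup fun p => (normalizedFactors a).count p)
    (A B : ℕ → Ideal R)
    (hA0 : A 0 = a)
    (hB1 : B 1 = a.radical)
    (hA : ∀ i, 1 ≤ i → A i = (A (i - 1)).colon (B i))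
    (hB : ∀ i, 1 ≤ i → B (i + 1) = A i + B i) :
    (∀ i, i ≤ m → A i = ∏ j ∈ Finset.Icc (i + 1) m, g j ^ (j - i)) ∧
      (∀ i, 1 ≤ i → i ≤ m → B i = ∏ j ∈ Finset.Icc i m, g j) := by
  classical
  set F := normalizedFactors a with hF
  set P := F.toFinset with hP
  have habot : a ≠ ⊥ := ha
  -- basic facts about the primes in the factorization
  have hmem : ∀ p, p ∈ P ↔ p ∈ F := fun p => Multiset.mem_toFinset
  have hprime : ∀ p ∈ P, Prime p := fun p hp =>
    prime_of_normalized_factor p ((hmem p).mp hp)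
  have hmaximal : ∀ p ∈ P, (p : Ideal R).IsMaximal := fun p hp =>
    (Ideal.isPrime_of_prime (hprime p hp)).isMaximal (hprime p hp).ne_zero
  have hcount1 : ∀ p ∈ P, 1 ≤ F.count p := fun p hp =>
    Multiset.count_pos.mpr ((hmem p).mp hp)
  have hcountm : ∀ p ∈ P, F.count p ≤ m := by
    intro p hp; rw [hm]; exact Finset.le_sup (f := fun p => Multiset.count p F) hp
  -- characterization of g j as a product over a filter of P
  have hgj : ∀ j, 1 ≤ j → g j = ∏ p ∈ P.filter (fun p => F.count p = j), p := by
    intro j hj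
    refine hg j hj _ (fun p => ?_)
    simp only [Finset.mem_filter, hmem]
    constructor
    · rintro ⟨hp, hc⟩
      exact ⟨hmaximal p ((hmem p).mpr hp), hc⟩
    · rintro ⟨_, hc⟩
      exact ⟨Multiset.count_pos.mp (by omega), hc⟩
  -- the model ideals
  set M : ℕ → Ideal R := fun i => ∏ p ∈ P, p ^ (F.count p - i) with hM
  set N : ℕ → Ideal R := fun i => ∏ p ∈ P.filter (fun p => i ≤ F.count p), p with hN
  have hNne : ∀ i, N i ≠ 0 := by
    intro i
    simp only [hN]
    exact Finset.prod_ne_zero_iff.mpr fun p hp =>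
      (hprime p (Finset.filter_subset _ _ hp)).ne_zero
  -- a = M 0
  have haM0 : a = M 0 := by
    conv_lhs => rw [← prod_normalizedFactors_eq_self habot]
    rw [hM]
    simpa using Finset.prod_multiset_count F
  -- M i = N (i+1) * M (i+1)
  have fact1 : ∀ i, M i = N (i + 1) * M (i + 1) := by
    intro i
    simp only [hM, hN]
    rw [Finset.prod_filter, ← Finset.prod_mul_distrib]
    apply Finset.prod_congr rfl
    intro p _
    by_cases h : i + 1 ≤ F.count p
    · rw [if_pos h]
      rw [← pow_succ']
      congr 1
      omega
    · rw [if_neg h]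
      have h1 : F.count p - i = 0 := by omega
      have h2 : F.count p - (i + 1) = 0 := by omega
      rw [h1, h2]
      simp
  -- N i = N (i+1) * (∏ p with count = i)
  have fact2 : ∀ i, N i = N (i + 1) * ∏ p ∈ P.filter (fun p => F.count p = i), p := by
    intro i
    simp only [hN]
    rw [Finset.prod_filter (fun p => i ≤ F.count p),
      Finset.prod_filter (fun p => i + 1 ≤ F.count p),
      Finset.prod_filter (fun p => F.count p = i), ← Finset.prod_mul_distrib]
    apply Finset.prod_congr rfl
    intro p _
    by_cases h : F.count p = i
    · rw [if_pos h, if_pos (by omega), if_neg (by omega), one_mul]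
    · by_cases h2 : i ≤ F.count p
      · rw [if_pos h2, if_pos (by omega), if_neg h, mul_one]
      · rw [if_neg h2, if_neg (by omega), if_neg h, mul_one]
  -- coprimality: M (i+1) is coprime to the product of primes of count exactly i
  have cop : ∀ i, IsCoprime (M (i + 1)) (∏ p ∈ P.filter (fun p => F.count p = i), p) := by
    intro i
    simp only [hM]
    apply IsCoprime.prod_left
    intro q hq
    by_cases h : F.count q - (i + 1) = 0
    · rw [h, pow_zero]; exact isCoprime_one_left
    · apply IsCoprime.pow_left
      apply IsCoprime.prod_right
      intro p hp
      obtain ⟨hpP, hpc⟩ := Finset.mem_filter.mp hp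
      have hne : q ≠ p := by
        intro hqp; subst hqp; omega
      exact Ideal.isCoprime_iff_sup_eq.mpr
        ((hmaximal q hq).coprime_of_ne (hmaximal p hpP) hne)
  -- sup step
  have supstep : ∀ i, M i ⊔ N i = N (i + 1) := by
    intro i
    rw [fact1 i, fact2 i, ← Ideal.mul_sup,
      Ideal.isCoprime_iff_sup_eq.mp (cop i), Ideal.mul_top]
  -- radical: rad a = N 1
  have hrad : a.radical = N 1 := by
    have hN1 : N 1 = ∏ p ∈ P, p := by
      simp only [hN]; rw [Finset.filter_true_of_mem hcount1]
    rw [hN1]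
    apply le_antisymm
    · refine Ideal.dvd_iff_le.mp (Finset.prod_primes_dvd _ hprime fun p hp => ?_)
      refine Ideal.dvd_iff_le.mpr ?_
      have hip : (p : Ideal R).IsPrime := Ideal.isPrime_of_prime (hprime p hp)
      rw [hip.radical_le_iff]
      exact Ideal.dvd_iff_le.mp (dvd_of_mem_normalizedFactors ((hmem p).mp hp))
    · intro x hx
      have hdvd : a ∣ (∏ p ∈ P, p) ^ m := by
        conv_lhs => rw [haM0]
        rw [hM, ← Finset.prod_pow]
        exact Finset.prod_dvd_prod_of_dvd _ _ fun p hp =>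
          pow_dvd_pow p (by have := hcountm p hp; omega)
      refine Ideal.mem_radical_iff.mpr ⟨m, ?_⟩
      exact Ideal.dvd_iff_le.mp hdvd (Ideal.pow_mem_pow hx m)
  -- main induction
  have key : ∀ i, i ≤ m → A i = M i ∧ (1 ≤ i → B i = N i) := by
    intro i
    induction i with
    | zero =>
      intro _
      exact ⟨hA0.trans haM0, by omega⟩
    | succ i ih =>
      intro hi
      obtain ⟨hAi, hBi⟩ := ih (by omega)
      have hBsucc : B (i + 1) = N (i + 1) := by
        rcases Nat.eq_zero_or_pos i with h0 | h1
        · subst h0; rw [hB1, hrad]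
        · rw [hB i h1, hAi, hBi h1, Ideal.add_eq_sup, supstep i]
      refine ⟨?_, fun _ => hBsucc⟩
      have hstep := hA (i + 1) (by omega)
      rw [Nat.add_sub_cancel] at hstep
      rw [hstep, hAi, hBsucc, fact1 i, mul_comm,
        colon_mul_right_aux _ _ (hNne (i + 1))]
  -- conversion lemmas to products of g
  have conv1 : ∀ i, (∏ j ∈ Finset.Icc (i + 1) m, g j ^ (j - i)) = M i := by
    intro i
    simp only [hM]
    have hside : ∀ p ∈ P, p ^ (F.count p - i) ≠ 1 → i + 1 ≤ F.count p := by
      intro p _ h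
      by_contra hc
      push_neg at hc
      exact h (by rw [show F.count p - i = 0 by omega, pow_zero])
    rw [← Finset.prod_filter_of_ne
      (s := P) (p := fun p => i + 1 ≤ F.count p)
      (f := fun p => p ^ (F.count p - i)) hside]
    rw [← Finset.prod_fiberwise_of_maps_to
      (t := Finset.Icc (i + 1) m) (g := fun p => F.count p)
      (fun p hp => by
        obtain ⟨hpP, hpc⟩ := Finset.mem_filter.mp hp
        exact Finset.mem_Icc.mpr ⟨hpc, hcountm p hpP⟩)
      (fun p => p ^ (F.count p - i))]
    apply Finset.prod_congr rfl
    intro j hj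
    obtain ⟨hj1, hj2⟩ := Finset.mem_Icc.mp hj
    have hfib : (P.filter (fun p => i + 1 ≤ F.count p)).filter (fun p => F.count p = j)
        = P.filter (fun p => F.count p = j) := by
      rw [Finset.filter_filter]
      apply Finset.filter_congr
      intro p _
      constructor
      · rintro ⟨_, h⟩; exact h
      · intro h; exact ⟨by omega, h⟩
    rw [hfib]
    refine Eq.symm ?_
    calc ∏ p ∈ P.filter (fun p => F.count p = j), p ^ (F.count p - i)
        = ∏ p ∈ P.filter (fun p => F.count p = j), p ^ (j - i) :=
          Finset.prod_congr rfl fun p hp => by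
            rw [(Finset.mem_filter.mp hp).2]
      _ = (∏ p ∈ P.filter (fun p => F.count p = j), p) ^ (j - i) :=
          Finset.prod_pow _ _ _
      _ = g j ^ (j - i) := by rw [hgj j (by omega)]
  have conv2 : ∀ i, 1 ≤ i → (∏ j ∈ Finset.Icc i m, g j)
      = ∏ p ∈ P.filter (fun p => i ≤ F.count p), p := by
    intro i hi
    rw [← Finset.prod_fiberwise_of_maps_to
      (t := Finset.Icc i m) (g := fun p => F.count p)
      (fun p hp => by
        obtain ⟨hpP, hpc⟩ := Finset.mem_filter.mp hp
        exact Finset.mem_Icc.mpr ⟨hpc, hcountm p hpP⟩)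
      (fun p => p)]
    apply Finset.prod_congr rfl
    intro j hj
    obtain ⟨hj1, hj2⟩ := Finset.mem_Icc.mp hj
    have hfib : (P.filter (fun p => i ≤ F.count p)).filter (fun p => F.count p = j)
        = P.filter (fun p => F.count p = j) := by
      rw [Finset.filter_filter]
      apply Finset.filter_congr
      intro p _
      constructor
      · rintro ⟨_, h⟩; exact h
      · intro h; exact ⟨by omega, h⟩
    rw [hfib, hgj j (by omega)]
  constructor
  · intro i hi
    exact ((key i hi).1).trans (conv1 i).symm
  · intro i hi1 him
    rw [((key i him).2 hi1), conv2 i hi1]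
end

section
/- Let q be a prime power and let R be a Dedekind domain that is a finitely generated algebra over F_q, so that every maximal ideal p of R has finite residue field; write deg p = dim_{F_q}(R/p). Let k ≥ 1, let a be a nonzero proper radical ideal of R such that every maximal ideal containing a has degree at least k, and let u_k be the intersection of all maximal ideals p of R with deg p dividing k. Then a + u_k equals the product of all maximal ideals p with a ⊆ p and deg p = k (the unit ideal R if there are none). -/
open Polynomial in
/-- There are only finitely many maximal ideals of residue degree dividing `k` in a
finitely generated algebra over a finite field. -/
lemma finite_setOf_maximal_degree_dvd {F R : Type*} [Field F] [Finite F]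
    [CommRing R] [IsDomain R] [Algebra F R] (hfg : Algebra.FiniteType F R)
    (k : ℕ) (hk : 1 ≤ k) :
    {p : Ideal R | p.IsMaximal ∧ Module.finrank F (R ⧸ p) ∣ k}.Finite := by
  classical
  cases nonempty_fintype F
  obtain ⟨s, hs⟩ := hfg.out
  set q := Fintype.card F with hq
  set Ω := AlgebraicClosure F
  set Kset : Set Ω := {x | x ^ q ^ k = x} with hKset
  have hq1 : 1 < q := Fintype.one_lt_card
  have hKfin : Kset.Finite := by
    have h1 : ((X : Polynomial Ω) ^ q ^ k - X) ≠ 0 :=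
      FiniteField.X_pow_card_pow_sub_X_ne_zero Ω (p := q) (n := k) (by omega) hq1
    refine (Polynomial.finite_setOf_isRoot h1).subset ?_
    intro x hx
    simp only [Set.mem_setOf_eq, IsRoot.def, eval_sub, eval_pow, eval_X] at hx ⊢
    rw [hx, sub_self]
  have key : ∀ p : {p : Ideal R | p.IsMaximal ∧ Module.finrank F (R ⧸ p) ∣ k},
      ∃ φ : R →ₐ[F] Ω, (RingHom.ker φ = (p : Ideal R)) ∧ ∀ x : R, φ x ∈ Kset := by
    rintro ⟨p, hpm, hpd⟩
    haveI : p.IsMaximal := hpm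
    haveI : p.IsPrime := hpm.isPrime
    have hdpos : 0 < Module.finrank F (R ⧸ p) := by
      rcases Nat.eq_zero_or_pos (Module.finrank F (R ⧸ p)) with h | h
      · rw [h] at hpd; exact absurd (Nat.eq_zero_of_zero_dvd hpd) (by omega)
      · exact h
    haveI : FiniteDimensional F (R ⧸ p) := Module.finite_of_finrank_pos hdpos
    haveI : Finite (R ⧸ p) := Module.finite_of_finite F
    cases nonempty_fintype (R ⧸ p)
    have hcard : Fintype.card (R ⧸ p) = q ^ Module.finrank F (R ⧸ p) :=
      Module.card_eq_pow_finrank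
    haveI : Algebra.IsAlgebraic F (R ⧸ p) := Algebra.IsAlgebraic.of_finite _ _
    let g : (R ⧸ p) →ₐ[F] Ω := IsAlgClosed.lift
    refine ⟨g.comp (Ideal.Quotient.mkₐ F p), ?_, ?_⟩
    · symm
      refine hpm.eq_of_le ?_ ?_
      · intro htop
        have h1 : (1 : R) ∈ RingHom.ker (g.comp (Ideal.Quotient.mkₐ F p)) :=
          htop ▸ Submodule.mem_top
        rw [RingHom.mem_ker, map_one] at h1
        exact one_ne_zero h1
      · intro x hx
        rw [RingHom.mem_ker]
        simp only [AlgHom.coe_comp, Function.comp_apply, Ideal.Quotient.mkₐ_eq_mk]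
        rw [Ideal.Quotient.eq_zero_iff_mem.mpr hx, map_zero]
    · intro x
      show (g ((Ideal.Quotient.mkₐ F p) x)) ^ q ^ k = g ((Ideal.Quotient.mkₐ F p) x)
      rw [← map_pow]
      congr 1
      letI : Field (R ⧸ p) := Ideal.Quotient.field p
      obtain ⟨m, hm⟩ := hpd
      rw [hm, pow_mul, ← hcard]
      exact FiniteField.pow_card_pow m _
  choose φ hker hmem using key
  haveI : Finite ↥Kset := hKfin.to_subtype
  rw [← Set.finite_coe_iff]
  refine Finite.of_injective
    (fun p => fun i : {x // x ∈ s} => (⟨φ p i.1, hmem p _⟩ : ↥Kset)) ?_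
  intro p p' h
  have hφ : φ p = φ p' := by
    have h2 : Algebra.adjoin F (s : Set R) ≤ AlgHom.equalizer (φ p) (φ p') := by
      rw [Algebra.adjoin_le_iff]
      intro x hx
      have := congrFun h ⟨x, hx⟩
      simpa [Subtype.ext_iff] using this
    rw [hs] at h2
    ext x
    exact h2 (Algebra.mem_top (x := x))
  exact Subtype.ext (by rw [← hker p, hφ, hker p'])

lemma prod_eq_inf_of_maximal {R : Type*} [CommRing R] (s : Finset (Ideal R))
    (h : ∀ p ∈ s, p.IsMaximal) : ∏ p ∈ s, p = s.inf id := by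
  classical
  induction s using Finset.induction_on with
  | empty => simp
  | @insert p s' hps ih =>
    have hp : p.IsMaximal := h p (Finset.mem_insert_self _ _)
    have h' : ∀ q ∈ s', q.IsMaximal := fun q hq => h q (Finset.mem_insert_of_mem hq)
    rw [Finset.prod_insert hps, Finset.inf_insert, ← ih h']
    have hcop : p ⊔ ∏ q ∈ s', q = ⊤ := by
      refine Ideal.sup_prod_eq_top fun q hq => ?_
      exact Ideal.IsMaximal.coprime_of_ne hp (h' q hq) (fun he => hps (he ▸ hq))
    simpa [id] using Ideal.mul_eq_inf_of_coprime hcop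

/-- Let `R` be a Dedekind domain that is a finitely generated algebra over the finite
field `F` (so all residue fields of maximal ideals are finite); write
`deg p = dim_F (R/p)`. Let `k ≥ 1`, let `a` be a nonzero proper radical ideal all of
whose maximal-ideal divisors have degree at least `k`, and let `u` be the intersection
of all maximal ideals of degree dividing `k`. Then `a + u` is the product of all
maximal ideals `p ⊇ a` with `deg p = k` (the unit ideal if there are none). -/
theorem sum_with_universal_ideal {F R : Type*} [Field F] [Finite F]
    [CommRing R] [IsDedekindDomain R] [Algebra F R]
    (hfg : Algebra.FiniteType F R)
    (k : ℕ) (hk : 1 ≤ k)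
    (a : Ideal R) (ha0 : a ≠ 0) (haT : a ≠ ⊤) (harad : a.radical = a)
    (hdeg : ∀ p : Ideal R, p.IsMaximal → a ≤ p → k ≤ Module.finrank F (R ⧸ p))
    (u : Ideal R)
    (hu : u = sInf {p : Ideal R | p.IsMaximal ∧ Module.finrank F (R ⧸ p) ∣ k})
    (S : Finset (Ideal R))
    (hS : ∀ p : Ideal R, p ∈ S ↔ p.IsMaximal ∧ a ≤ p ∧ Module.finrank F (R ⧸ p) = k) :
    a + u = ∏ p ∈ S, p := by
  classical
  have hTfin := finite_setOf_maximal_degree_dvd hfg k hk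
  set T := hTfin.toFinset with hTdef
  have hT : ∀ p : Ideal R, p ∈ T ↔ p.IsMaximal ∧ Module.finrank F (R ⧸ p) ∣ k := by
    intro p; rw [hTdef, Set.Finite.mem_toFinset]; rfl
  have hmaxT : ∀ p ∈ T, p.IsMaximal := fun p hp => ((hT p).mp hp).1
  have hu2 : u = ∏ p ∈ T, p := by
    rw [hu, prod_eq_inf_of_maximal T hmaxT, Finset.inf_id_eq_sInf, hTdef,
      Set.Finite.coe_toFinset]
  have hST : S ⊆ T := by
    intro p hp
    obtain ⟨h1, _, h3⟩ := (hS p).mp hp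
    exact (hT p).mpr ⟨h1, h3 ▸ dvd_refl k⟩
  have hsplit : ∏ p ∈ T, p = (∏ p ∈ T \ S, p) * ∏ p ∈ S, p := (Finset.prod_sdiff hST).symm
  have hcop : a ⊔ ∏ p ∈ T \ S, p = ⊤ := by
    refine Ideal.sup_prod_eq_top fun p hp => ?_
    obtain ⟨hpT, hpS⟩ := Finset.mem_sdiff.mp hp
    obtain ⟨hpm, hpd⟩ := (hT p).mp hpT
    have hna : ¬ a ≤ p := by
      intro hle
      have h1 : k ≤ Module.finrank F (R ⧸ p) := hdeg p hpm hle
      have h2 : Module.finrank F (R ⧸ p) ≤ k := Nat.le_of_dvd (by omega) hpd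
      exact hpS ((hS p).mpr ⟨hpm, hle, le_antisymm h2 h1⟩)
    have hlt : p < p ⊔ a := lt_of_le_of_ne le_sup_left
      (fun he => hna (he ▸ le_sup_right))
    rw [sup_comm]
    exact hpm.1.2 _ hlt
  have hle : a ≤ ∏ p ∈ S, p := by
    rw [prod_eq_inf_of_maximal S (fun p hp => ((hS p).mp hp).1)]
    exact Finset.le_inf fun p hp => ((hS p).mp hp).2.1
  calc a + u = a ⊔ u := Submodule.add_eq_sup a u
    _ = a ⊔ (∏ p ∈ T \ S, p) * ∏ p ∈ S, p := by rw [hu2, hsplit]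
    _ = a ⊔ ∏ p ∈ S, p := Ideal.sup_mul_eq_of_coprime_left hcop
    _ = ∏ p ∈ S, p := sup_eq_right.mpr hle
end

section
/- Let R be a commutative ring, let p_1, …, p_m (m ≥ 1) be pairwise distinct maximal ideals of R, and set a = p_1 ⋯ p_m. Then for every b ∈ R, the ideal ⟨b⟩ + a equals the product of those p_i that contain b, i.e. ⟨b⟩ + a = ∏_{i : b ∈ p_i} p_i, where the empty product is the unit ideal R. -/
open Classical

/-!
The product of the `p i` with `b ∈ p i` is their intersection, since distinct maximal ideals are
pairwise coprime, so it contains `b`; and `b` is coprime to the product of the remaining `p i`.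
Both facts together give `⟨b⟩ + J * K = J` for `J`, `K` the two partial products of `a = J * K`.
-/

namespace Ideal

variable {R : Type*} [CommSemiring R]

theorem isCoprime_span_singleton_of_notMem {M : Ideal R} (hM : M.IsMaximal) {b : R}
    (hb : b ∉ M) : IsCoprime (span {b}) M := by
  rw [isCoprime_iff_codisjoint, codisjoint_comm]
  exact (isMaximal_def.mp hM).not_le_iff_codisjoint.mp (by rwa [span_singleton_le_iff_mem])

theorem sup_mul_eq_of_le_of_isCoprime {I J K : Ideal R} (hIJ : I ≤ J) (hIK : IsCoprime I K) :
    I ⊔ J * K = J := by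
  refine le_antisymm (sup_le hIJ mul_le_left) ?_
  calc J = J * (I ⊔ K) := by rw [hIK.sup_eq, mul_top]
    _ = J * I ⊔ J * K := mul_sup _ _ _
    _ ≤ I ⊔ J * K := sup_le_sup_right mul_le_right _

end Ideal

open Ideal Finset in
theorem span_add_eq_prod_of_mem_general {R : Type*} [CommRing R]
    (m : ℕ) (p : Fin m → Ideal R)
    (hmax : ∀ i, (p i).IsMaximal) (hinj : Function.Injective p)
    (a : Ideal R) (hap : a = ∏ i, p i) (b : R) :
    Ideal.span {b} + a = ∏ i ∈ Finset.univ.filter (fun i => b ∈ p i), p i := by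
  have hcop : Pairwise fun i j => IsCoprime (p i) (p j) := fun i j hij =>
    have := hmax i; have := hmax j; isCoprime_of_isMaximal (hinj.ne hij)
  have hb_le : span {b} ≤ ∏ i ∈ univ.filter (b ∈ p ·), p i := by
    rw [prod_eq_iInf_of_pairwise_isCoprime (hcop.set_pairwise _)]
    exact le_iInf₂ fun i hi => (span_singleton_le_iff_mem _).mpr (mem_filter.mp hi).2
  have hb_coprime : IsCoprime (span {b}) (∏ i ∈ univ.filter (b ∉ p ·), p i) :=
    IsCoprime.prod_right fun i hi =>
      isCoprime_span_singleton_of_notMem (hmax i) (mem_filter.mp hi).2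
  rw [hap, ← prod_filter_mul_prod_filter_not univ (b ∈ p ·), Ideal.add_eq_sup]
  exact sup_mul_eq_of_le_of_isCoprime hb_le hb_coprime

/-- Let `p 1, …, p m` (`m ≥ 1`) be pairwise distinct maximal ideals of a commutative
ring `R` and `a = p 1 ⋯ p m`. Then for every `b ∈ R`, the ideal `⟨b⟩ + a` equals the
product of those `p i` that contain `b` (the empty product being the unit ideal). -/
theorem span_add_eq_prod_of_mem {R : Type*} [CommRing R]
    (m : ℕ) (hm : 1 ≤ m) (p : Fin m → Ideal R)
    (hmax : ∀ i, (p i).IsMaximal) (hinj : Function.Injective p)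
    (a : Ideal R) (hap : a = ∏ i, p i) (b : R) :
    Ideal.span {b} + a = ∏ i ∈ Finset.univ.filter (fun i => b ∈ p i), p i :=
  span_add_eq_prod_of_mem_general m p hmax hinj a hap b
end

section
/- Let F be a finite field and let R be a Dedekind domain that is finitely generated as an F-algebra. Then for every nonzero ideal a of R, the quotient ring R/a is finite. -/
/-!
Every prime containing the nonzero ideal `a` is nonzero, hence maximal, so `R ⧸ a` is a
Noetherian ring of dimension zero, i.e. Artinian. By the Nullstellensatz an Artinian algebra of
finite type over a Jacobson ring (such as a finite ring) is a finite module over it, so `R ⧸ a`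
is finite.
-/

theorem Ideal.isArtinianRing_quotient_of_ne_bot {R : Type*} [CommRing R] [IsDomain R]
    [IsNoetherianRing R] [Ring.DimensionLEOne R] {a : Ideal R} (ha : a ≠ ⊥) :
    IsArtinianRing (R ⧸ a) :=
  have : Ring.KrullDimLE 0 (R ⧸ a) :=
    krullDimLE_zero_quotient_iff_forall_minimalPrimes_isMaximal.mpr fun _ hJ ↦
      hJ.1.1.isMaximal (ne_bot_of_le_ne_bot ha hJ.1.2)
  IsNoetherianRing.isArtinianRing_of_krullDimLE_zero

theorem Algebra.FiniteType.finite_of_isArtinianRing {F A : Type*} [CommRing F] [Finite F]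
    [CommRing A] [Algebra F A] [Algebra.FiniteType F A] [IsArtinianRing A] : Finite A :=
  have : Module.Finite F A := Module.finite_of_isArtinianRing F A
  Module.finite_of_finite F

/-- If `R` is a Dedekind domain which is a finitely generated algebra over a
finite field `F`, then for every nonzero ideal `a` of `R` the quotient ring
`R/a` is finite. -/
theorem quotient_finite_of_ne_zero {F R : Type*} [Field F] [Finite F]
    [CommRing R] [IsDedekindDomain R] [Algebra F R]
    (hfg : Algebra.FiniteType F R) (a : Ideal R) (ha : a ≠ 0) :
    Finite (R ⧸ a) :=
  have := Ideal.isArtinianRing_quotient_of_ne_bot ha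
  Algebra.FiniteType.finite_of_isArtinianRing (F := F)
end
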